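/- In a Ferromagnetic Potts Model, for fixed node marginals μ_u (probability vectors), the minimum over locally consistent edge marginals μ_e of Σ_{i≠j} μ_e(ij) equals (1/2)‖μ_u − μ_v‖₁; it is attained by setting μ_e(ii) = min(μ_u(i), μ_v(i)). Hence the local-polytope relaxation of MAP inference in a Ferromagnetic Potts Model equals the LP relaxation with edge term w(u,v)·(1/2)‖μ_u − μ_v‖₁. -/

import Mathlib

open Finset

variable {V L : Type*}

/-- `x` is a probability vector over the labels `L`. -/
def IsProbVec [Fintype L] (x : L → ℝ) : Prop :=
  (∀ i, 0 ≤ x i) ∧ ∑ i, x i = 1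

/-- Half the ℓ₁ distance between two label vectors. -/
noncomputable def dL1 [Fintype L] (x y : L → ℝ) : ℝ :=
  (1 / 2) * ∑ i, |x i - y i|

/-- The LP relaxation objective of Uniform Metric Labeling. -/
noncomputable def QLP [Fintype V] [Fintype L] (E : Finset (V × V))
    (c : V → L → ℝ) (w : V × V → ℝ) (μ : V → L → ℝ) : ℝ :=
  ∑ u, ∑ i, c u i * μ u i + ∑ e ∈ E, w e * dL1 (μ e.1) (μ e.2)

/-- The Uniform Metric Labeling objective. -/
def Q [Fintype V] [DecidableEq L] (E : Finset (V × V)) (c : V → L → ℝ)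
    (w : V × V → ℝ) (g : V → L) : ℝ :=
  ∑ u, c u (g u) + ∑ e ∈ E.filter (fun e => g e.1 ≠ g e.2), w e

/-- The integer LP solution corresponding to a labeling `f`. -/
def toVec [DecidableEq L] (f : V → L) : V → L → ℝ :=
  fun u i => if f u = i then 1 else 0

/-!
A coupling of `x` and `y` puts at most `min (x i) (y i)` on the diagonal entry `(i, i)`, so its
off-diagonal mass is at least `∑ i, (x i - min (x i) (y i)) = ½ ‖x - y‖₁`. Equality holds for the
coupling that keeps `min x y` on the diagonal and couples the residuals `x - min x y` and
`y - min x y`, which have disjoint supports and the same total `½ ‖x - y‖₁`, independently.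
Summing over the edges with weights `w e ≥ 0`, every point of the local polytope is dominated by
the `QLP` value of its node marginals, and that value is attained, so the two infima agree.
-/

section Coupling

variable {L : Type*} [Fintype L]

structure IsCoupling (x y : L → ℝ) (μe : L → L → ℝ) : Prop where
  nonneg : ∀ i j, 0 ≤ μe i j
  sum_row : ∀ i, ∑ j, μe i j = x i
  sum_col : ∀ j, ∑ i, μe i j = y j

def offDiagMass {M : Type*} [AddCommMonoid M] [DecidableEq L] (μe : L → L → M) : M :=
  ∑ i, ∑ j, if i = j then 0 else μe i j

lemma offDiagMass_eq_sum_sub_diag {M : Type*} [AddCommGroup M] [DecidableEq L]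
    (μe : L → L → M) : offDiagMass μe = ∑ i, (∑ j, μe i j - μe i i) := by
  simp only [offDiagMass, sum_ite, sum_const_zero, filter_ne, mem_univ, sum_erase_eq_sub,
    zero_add]

lemma dL1_comm (x y : L → ℝ) : dL1 x y = dL1 y x := by
  simp only [dL1, abs_sub_comm]

lemma sum_sub_min_eq_dL1 {x y : L → ℝ} (hxy : ∑ i, x i = ∑ i, y i) :
    ∑ i, (x i - min (x i) (y i)) = dL1 x y := by
  have key : ∀ i, x i - min (x i) (y i) = (x i - y i) / 2 + |x i - y i| / 2 := by
    intro i
    rcases le_total (x i) (y i) with h | h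
    · rw [min_eq_left h, abs_of_nonpos (sub_nonpos.2 h)]; ring
    · rw [min_eq_right h, abs_of_nonneg (sub_nonneg.2 h)]; ring
  rw [sum_congr rfl fun i _ => key i, sum_add_distrib, ← sum_div, ← sum_div, sum_sub_distrib,
    hxy, dL1]
  ring

namespace IsCoupling

variable {x y : L → ℝ} {μe : L → L → ℝ}

lemma sum_eq (h : IsCoupling x y μe) : ∑ i, x i = ∑ j, y j := by
  simp only [← h.sum_row, ← h.sum_col]
  exact sum_comm

lemma diag_le_min (h : IsCoupling x y μe) (i : L) : μe i i ≤ min (x i) (y i) :=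
  le_min (h.sum_row i ▸ single_le_sum (fun j _ => h.nonneg i j) (mem_univ i))
    (h.sum_col i ▸ single_le_sum (fun j _ => h.nonneg j i) (mem_univ i))

lemma dL1_le_offDiagMass [DecidableEq L] (h : IsCoupling x y μe) :
    dL1 x y ≤ offDiagMass μe := by
  rw [offDiagMass_eq_sum_sub_diag, ← sum_sub_min_eq_dL1 h.sum_eq]
  refine sum_le_sum fun i _ => ?_
  rw [h.sum_row i]
  linarith [h.diag_le_min i]

end IsCoupling

variable [DecidableEq L]

noncomputable def maximalCoupling (x y : L → ℝ) (i j : L) : ℝ :=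
  (if i = j then min (x i) (y i) else 0) +
    (x i - min (x i) (y i)) * (y j - min (x j) (y j)) / dL1 x y

lemma maximalCoupling_swap (x y : L → ℝ) (i j : L) :
    maximalCoupling y x j i = maximalCoupling x y i j := by
  simp only [maximalCoupling, eq_comm (a := j), min_comm (y _), dL1_comm y x, mul_comm]
  split_ifs with h
  · rw [h]
  · rfl

lemma maximalCoupling_diag (x y : L → ℝ) (i : L) :
    maximalCoupling x y i i = min (x i) (y i) := by
  have : (x i - min (x i) (y i)) * (y i - min (x i) (y i)) = 0 := by
    rcases le_total (x i) (y i) with h | h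
    · simp [min_eq_left h]
    · simp [min_eq_right h]
  simp [maximalCoupling, this]

lemma sum_maximalCoupling_row {x y : L → ℝ} (hxy : ∑ i, x i = ∑ i, y i) (i : L) :
    ∑ j, maximalCoupling x y i j = x i := by
  have hres : ∑ j, (y j - min (x j) (y j)) = dL1 x y := by
    simpa only [min_comm (y _), dL1_comm y x] using sum_sub_min_eq_dL1 hxy.symm
  -- `a / 0 = 0` is harmless here: when `dL1 x y = 0` the residual at `i` is already `0`
  have hcancel : (x i - min (x i) (y i)) * dL1 x y / dL1 x y = x i - min (x i) (y i) := by
    rcases eq_or_ne (dL1 x y) 0 with h0 | h0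
    · have hle : x i - min (x i) (y i) ≤ dL1 x y := sum_sub_min_eq_dL1 hxy ▸
        single_le_sum (fun j _ => sub_nonneg.2 (min_le_left (x j) (y j))) (mem_univ i)
      have : x i - min (x i) (y i) = 0 := le_antisymm (h0 ▸ hle) (sub_nonneg.2 (min_le_left _ _))
      simp [this]
    · exact mul_div_cancel_right₀ _ h0
  simp only [maximalCoupling, sum_add_distrib, sum_ite_eq, mem_univ, if_true, ← sum_div,
    ← mul_sum, hres, hcancel]
  ring

lemma sum_maximalCoupling_col {x y : L → ℝ} (hxy : ∑ i, x i = ∑ i, y i) (j : L) :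
    ∑ i, maximalCoupling x y i j = y j := by
  simpa only [maximalCoupling_swap] using sum_maximalCoupling_row hxy.symm j

lemma isCoupling_maximalCoupling {x y : L → ℝ} (hx : ∀ i, 0 ≤ x i) (hy : ∀ i, 0 ≤ y i)
    (hxy : ∑ i, x i = ∑ i, y i) : IsCoupling x y (maximalCoupling x y) where
  nonneg i j := by
    have hdiag : 0 ≤ if i = j then min (x i) (y i) else 0 := by
      split_ifs
      exacts [le_min (hx i) (hy i), le_rfl]
    have hres : 0 ≤ (x i - min (x i) (y i)) * (y j - min (x j) (y j)) :=
      mul_nonneg (sub_nonneg.2 (min_le_left _ _)) (sub_nonneg.2 (min_le_right _ _))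
    have hd : 0 ≤ dL1 x y := by unfold dL1; positivity
    exact add_nonneg hdiag (div_nonneg hres hd)
  sum_row := sum_maximalCoupling_row hxy
  sum_col := sum_maximalCoupling_col hxy

lemma offDiagMass_maximalCoupling {x y : L → ℝ} (hxy : ∑ i, x i = ∑ i, y i) :
    offDiagMass (maximalCoupling x y) = dL1 x y := by
  simp only [offDiagMass_eq_sum_sub_diag, sum_maximalCoupling_row hxy, maximalCoupling_diag,
    sum_sub_min_eq_dL1 hxy]

end Coupling

/-- In a Ferromagnetic Potts Model, for fixed node marginals the minimum over
locally consistent edge marginals of the off-diagonal mass is half the ℓ₁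
distance, attained by putting `min(μ_u(i), μ_v(i))` on the diagonal; hence the
local-polytope relaxation coincides with the LP relaxation `QLP`. -/
theorem local_polytope_eq_lp {V L : Type*} [Fintype V] [Fintype L] [DecidableEq L]
    (E : Finset (V × V)) (c : V → L → ℝ) (w : V × V → ℝ)
    (hw : ∀ e ∈ E, 0 ≤ w e) :
    (∀ x y : L → ℝ, IsProbVec x → IsProbVec y →
      (IsLeast {t : ℝ | ∃ μe : L → L → ℝ,
          (∀ i j, 0 ≤ μe i j) ∧
          (∀ i, ∑ j, μe i j = x i) ∧
          (∀ j, ∑ i, μe i j = y j) ∧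
          t = ∑ i, ∑ j, if i = j then (0 : ℝ) else μe i j}
        (dL1 x y)) ∧
      (∃ μe : L → L → ℝ,
          (∀ i j, 0 ≤ μe i j) ∧
          (∀ i, ∑ j, μe i j = x i) ∧
          (∀ j, ∑ i, μe i j = y j) ∧
          (∀ i, μe i i = min (x i) (y i)) ∧
          ∑ i, ∑ j, (if i = j then (0 : ℝ) else μe i j) = dL1 x y)) ∧
    sInf {t : ℝ | ∃ μ : V → L → ℝ, ∃ μe : V × V → L → L → ℝ,
        (∀ u, IsProbVec (μ u)) ∧
        (∀ e ∈ E, ∀ i j, 0 ≤ μe e i j) ∧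
        (∀ e ∈ E, ∀ i, ∑ j, μe e i j = μ e.1 i) ∧
        (∀ e ∈ E, ∀ j, ∑ i, μe e i j = μ e.2 j) ∧
        t = ∑ u, ∑ i, c u i * μ u i +
            ∑ e ∈ E, w e * ∑ i, ∑ j, (if i = j then (0 : ℝ) else μe e i j)} =
      sInf {t : ℝ | ∃ μ : V → L → ℝ, (∀ u, IsProbVec (μ u)) ∧ t = QLP E c w μ} := by
  have hcoup {x y : L → ℝ} (hx : IsProbVec x) (hy : IsProbVec y) :
      IsCoupling x y (maximalCoupling x y) :=
    isCoupling_maximalCoupling hx.1 hy.1 (hx.2.trans hy.2.symm)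
  have hmass {x y : L → ℝ} (hx : IsProbVec x) (hy : IsProbVec y) :
      offDiagMass (maximalCoupling x y) = dL1 x y :=
    offDiagMass_maximalCoupling (hx.2.trans hy.2.symm)
  refine ⟨fun x y hx hy => ⟨⟨?_, ?_⟩, ?_⟩, csInf_eq_csInf_of_forall_exists_le ?_ ?_⟩
  · have h := hcoup hx hy
    exact ⟨maximalCoupling x y, h.nonneg, h.sum_row, h.sum_col, (hmass hx hy).symm⟩
  · rintro t ⟨μe, h0, h1, h2, rfl⟩
    exact IsCoupling.dL1_le_offDiagMass ⟨h0, h1, h2⟩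
  · have h := hcoup hx hy
    exact ⟨maximalCoupling x y, h.nonneg, h.sum_row, h.sum_col, maximalCoupling_diag x y,
      hmass hx hy⟩
  · rintro t ⟨μ, μe, hμ, h0, h1, h2, rfl⟩
    refine ⟨QLP E c w μ, ⟨μ, hμ, rfl⟩, add_le_add_right (sum_le_sum fun e he => ?_) _⟩
    exact mul_le_mul_of_nonneg_left
      (IsCoupling.dL1_le_offDiagMass ⟨h0 e he, h1 e he, h2 e he⟩) (hw e he)
  · rintro t ⟨μ, hμ, rfl⟩
    have h (e : V × V) := hcoup (hμ e.1) (hμ e.2)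
    refine ⟨_, ⟨μ, fun e => maximalCoupling (μ e.1) (μ e.2), hμ, fun e _ => (h e).nonneg,
      fun e _ => (h e).sum_row, fun e _ => (h e).sum_col, rfl⟩, le_of_eq ?_⟩
    exact congrArg (_ + ·) (sum_congr rfl fun e _ => congrArg (w e * ·) (hmass (hμ _) (hμ _)))
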